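/- arXiv:2109.12357 — 2 statements merged into one kernel-verified Lean document; each statement's English description precedes it below -/
import Mathlib

section
/- Let A, B be symmetric positive definite M×M real matrices with A − B positive definite and B invertible. Then (A−B)⁻¹ − [(A−B)B⁻¹(A−B)+(A−B)]⁻¹ = (A−B)⁻¹(I − B A⁻¹). -/
open Matrix

/-- Key simplification in Appendix B:
`(A−B)⁻¹ − [(A−B)B⁻¹(A−B)+(A−B)]⁻¹ = (A−B)⁻¹(I − BA⁻¹)`. -/
theorem stmt_9 {M : ℕ} (A B : Matrix (Fin M) (Fin M) ℝ)
    (hA : A.PosDef) (hB : B.PosDef) (hAB : (A - B).PosDef) :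
    (A - B)⁻¹ - ((A - B) * B⁻¹ * (A - B) + (A - B))⁻¹ =
      (A - B)⁻¹ * ((1 : Matrix (Fin M) (Fin M) ℝ) - B * A⁻¹) := by
  have hAu : IsUnit A.det := isUnit_iff_ne_zero.mpr hA.det_pos.ne'
  have hBu : IsUnit B.det := isUnit_iff_ne_zero.mpr hB.det_pos.ne'
  have hCu : IsUnit (A - B).det := isUnit_iff_ne_zero.mpr hAB.det_pos.ne'
  have hfac : (A - B) = (A - B) * B⁻¹ * B := by
    rw [Matrix.mul_assoc, Matrix.nonsing_inv_mul B hBu, Matrix.mul_one]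
  have key : (A - B) * B⁻¹ * (A - B) + (A - B) = (A - B) * B⁻¹ * A := by
    nth_rewrite 3 [hfac]
    rw [← Matrix.mul_add]
    congr 1
    abel
  rw [key, Matrix.mul_inv_rev, Matrix.mul_inv_rev,
    Matrix.nonsing_inv_nonsing_inv B hBu]
  have h1 : A⁻¹ * (B * (A - B)⁻¹) = (A - B)⁻¹ - A⁻¹ := by
    have e : A⁻¹ * B = 1 - A⁻¹ * (A - B) := by
      rw [Matrix.mul_sub, Matrix.nonsing_inv_mul A hAu]; abel
    rw [← Matrix.mul_assoc, e, Matrix.sub_mul, Matrix.one_mul,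
      Matrix.mul_assoc, Matrix.mul_nonsing_inv _ hCu, Matrix.mul_one]
  have h2 : (A - B)⁻¹ * (B * A⁻¹) = (A - B)⁻¹ - A⁻¹ := by
    have e : B * A⁻¹ = 1 - (A - B) * A⁻¹ := by
      rw [Matrix.sub_mul, Matrix.mul_nonsing_inv A hAu]; abel
    rw [e, Matrix.mul_sub, Matrix.mul_one, ← Matrix.mul_assoc,
      Matrix.nonsing_inv_mul _ hCu, Matrix.one_mul]
  rw [h1, Matrix.mul_sub, Matrix.mul_one, h2]
end

section
/- Let A, B be symmetric positive definite M×M real matrices with A − B positive definite, and let A_z = α⁻¹A for α > 0. Then with E₁ = (A−B)⁻¹ and E₂ = [(A−B)B⁻¹(A−B)+(A−B)]⁻¹, one has −α(E₁ − E₂ − α(E₁−E₂)A_z(E₁−E₂)) = 0, i.e., the replica-symmetric off-diagonal dual parameter Ã vanishes. -/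
open Matrix

/-- The replica-symmetric off-diagonal dual parameter `Ã` vanishes:
with `E₁ = (A−B)⁻¹`, `E₂ = [(A−B)B⁻¹(A−B)+(A−B)]⁻¹` and `A_z = α⁻¹A`,
`−α(E₁ − E₂ − α(E₁−E₂)A_z(E₁−E₂)) = 0`. -/
theorem stmt_10 {M : ℕ} (A B : Matrix (Fin M) (Fin M) ℝ)
    (hA : A.PosDef) (hB : B.PosDef) (hAB : (A - B).PosDef)
    (α : ℝ) (hα : 0 < α) :
    (-α) • ((A - B)⁻¹ - ((A - B) * B⁻¹ * (A - B) + (A - B))⁻¹ -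
        α • (((A - B)⁻¹ - ((A - B) * B⁻¹ * (A - B) + (A - B))⁻¹) *
            (α⁻¹ • A) *
          ((A - B)⁻¹ - ((A - B) * B⁻¹ * (A - B) + (A - B))⁻¹))) = 0 := by
  set C := A - B with hC
  have hAdet : IsUnit A.det := isUnit_iff_ne_zero.mpr (ne_of_gt hA.det_pos)
  have hBdet : IsUnit B.det := isUnit_iff_ne_zero.mpr (ne_of_gt hB.det_pos)
  have hCdet : IsUnit C.det := isUnit_iff_ne_zero.mpr (ne_of_gt hAB.det_pos)
  have key : C * B⁻¹ * C + C = C * B⁻¹ * A := by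
    have : C * B⁻¹ * A = C * B⁻¹ * (C + B) := by rw [hC, sub_add_cancel]
    rw [this, mul_add, mul_assoc C B⁻¹ B, Matrix.nonsing_inv_mul B hBdet, mul_one]
  have hE2 : (C * B⁻¹ * C + C)⁻¹ = A⁻¹ * B * C⁻¹ := by
    rw [key, Matrix.mul_inv_rev, Matrix.mul_inv_rev, Matrix.nonsing_inv_nonsing_inv B hBdet,
      mul_assoc]
  have hdiff : C⁻¹ - (C * B⁻¹ * C + C)⁻¹ = A⁻¹ := by
    rw [hE2]
    have : C⁻¹ - A⁻¹ * B * C⁻¹ = (1 - A⁻¹ * B) * C⁻¹ := by rw [sub_mul, one_mul]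
    rw [this]
    have h1 : 1 - A⁻¹ * B = A⁻¹ * C := by
      rw [hC, mul_sub, Matrix.nonsing_inv_mul A hAdet]
    rw [h1, mul_assoc, Matrix.mul_nonsing_inv C hCdet, mul_one]
  rw [hdiff]
  have : A⁻¹ * (α⁻¹ • A) * A⁻¹ = α⁻¹ • A⁻¹ := by
    rw [Matrix.mul_smul, Matrix.smul_mul, Matrix.nonsing_inv_mul A hAdet, one_mul]
  rw [this, smul_smul, mul_inv_cancel₀ (ne_of_gt hα), one_smul, sub_self, smul_zero]
end
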